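/- If S and T are n-simplices in R^N with disjoint interiors (relative to their common affine hull) such that S ∪ T is again an n-simplex, then S ∩ T is a common facet of S and T, and the affine hull of S ∩ T contains an (n−2)-dimensional face of S ∪ T. -/

import Mathlib

open Set MeasureTheory
open scoped Classical
noncomputable section

/-- Ambient Euclidean space `ℝ^N`. -/
abbrev Euc (N : ℕ) := EuclideanSpace ℝ (Fin N)

/-- `s` is an `n`-simplex: the convex hull of `n+1` affinely independent points. -/
def IsSimplex {N : ℕ} (n : ℕ) (s : Set (Euc N)) : Prop :=
  ∃ v : Fin (n + 1) → Euc N, AffineIndependent ℝ v ∧ s = convexHull ℝ (Set.range v)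

/-- The (affine) dimension of a set: the rank of its vector span. -/
def sdim {N : ℕ} (s : Set (Euc N)) : ℕ := Module.finrank ℝ (vectorSpan ℝ s)

/-- A polytope: the compact convex hull of finitely many points (nonempty). -/
def IsPolytope {N : ℕ} (s : Set (Euc N)) : Prop :=
  ∃ t : Finset (Euc N), t.Nonempty ∧ s = convexHull ℝ (t : Set (Euc N))

/-- An `n`-polyhedron: a finite union of `n`-dimensional polytopes. -/
def IsPolyhedron {N : ℕ} (n : ℕ) (P : Set (Euc N)) : Prop :=
  ∃ F : Finset (Set (Euc N)), F.Nonempty ∧ (∀ Q ∈ F, IsPolytope Q ∧ sdim Q = n) ∧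
    (⋃ Q ∈ F, Q) = P

/-- A triangulation of the `n`-dimensional set `P`: a finite set of `n`-simplices with
union `P`, any two distinct ones intersecting in a set of dimension less than `n`. -/
def IsTriangulation {N : ℕ} (n : ℕ) (P : Set (Euc N)) (F : Finset (Set (Euc N))) : Prop :=
  (∀ T ∈ F, IsSimplex n T) ∧ (⋃ T ∈ F, T) = P ∧
    ∀ S ∈ F, ∀ T ∈ F, S ≠ T → sdim (S ∩ T) < n

/-- A starring of `P` at `a`: a triangulation all of whose simplices have a vertex at `a`. -/
def IsStarring {N : ℕ} (n : ℕ) (P : Set (Euc N)) (a : Euc N) (F : Finset (Set (Euc N))) : Prop :=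
  IsTriangulation n P F ∧
    ∀ T ∈ F, ∃ v : Fin (n + 1) → Euc N, AffineIndependent ℝ v ∧
      T = convexHull ℝ (Set.range v) ∧ a ∈ Set.range v

/-- `T` is dissected into the two `n`-simplices `T₁, T₂` by a hyperplane containing an
`(n-2)`-dimensional face of `T`. -/
def IsDissection {N : ℕ} (n : ℕ) (T T₁ T₂ : Set (Euc N)) : Prop :=
  IsSimplex n T₁ ∧ IsSimplex n T₂ ∧ T₁ ∪ T₂ = T ∧ T₁ ≠ T₂ ∧
  ∃ (f : Euc N →ₗ[ℝ] ℝ) (c : ℝ), f ≠ 0 ∧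
    T₁ = T ∩ {x | f x ≤ c} ∧ T₂ = T ∩ {x | c ≤ f x} ∧
    ∃ v : Fin (n + 1) → Euc N, AffineIndependent ℝ v ∧ T = convexHull ℝ (Set.range v) ∧
      ∃ s : Finset (Fin (n + 1)), s.card = n - 1 ∧ ∀ i ∈ s, f (v i) = c

/-- An elementary move: dissect one simplex of the triangulation into two `n`-simplices by a
hyperplane containing an `(n-2)`-face, or merge two simplices whose union is again a simplex. -/
def ElemMove {N : ℕ} (n : ℕ) (F G : Finset (Set (Euc N))) : Prop :=
  (∃ T ∈ F, ∃ T₁ T₂, IsDissection n T T₁ T₂ ∧ G = insert T₁ (insert T₂ (F.erase T))) ∨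
  (∃ T₁ ∈ F, ∃ T₂ ∈ F, T₁ ≠ T₂ ∧ IsSimplex n (T₁ ∪ T₂) ∧
    G = insert (T₁ ∪ T₂) ((F.erase T₁).erase T₂))

/-- Equivalence by finitely many elementary moves. -/
def MoveEquiv {N : ℕ} (n : ℕ) (F G : Finset (Set (Euc N))) : Prop :=
  Relation.ReflTransGen (ElemMove n) F G

/-- `μ` is a valuation on the class `S` of sets. -/
def IsValuation {N : ℕ} (S : Set (Set (Euc N))) (μ : Set (Euc N) → ℝ) : Prop :=
  μ ∅ = 0 ∧ ∀ A ∈ S, ∀ B ∈ S, A ∪ B ∈ S → A ∩ B ∈ S →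
    μ A + μ B = μ (A ∪ B) + μ (A ∩ B)

/-- `𝒯ⁿ`: simplices of dimension at most `n` (together with `∅`). -/
def simplexClass (N n : ℕ) : Set (Set (Euc N)) :=
  {s | s = ∅ ∨ ∃ k ≤ n, IsSimplex k s}

/-- `𝒫ⁿ`: polytopes of dimension at most `n` (together with `∅`). -/
def polytopeClass (N n : ℕ) : Set (Set (Euc N)) :=
  {s | s = ∅ ∨ (IsPolytope s ∧ sdim s ≤ n)}

/-- `𝒬ⁿ`: polyhedra (finite unions of polytopes) of dimension at most `n` (with `∅`). -/
def polyhedronClass (N n : ℕ) : Set (Set (Euc N)) :=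
  {s | s = ∅ ∨ ((∃ F : Finset (Set (Euc N)), F.Nonempty ∧ (∀ Q ∈ F, IsPolytope Q) ∧
      (⋃ Q ∈ F, Q) = s) ∧ sdim s ≤ n)}


/-!
Separate the relative interiors of `S` and `T` by a hyperplane `f = c`. Since `S` and `T` are
closed and `U = S ∪ T` is convex, `S = U ∩ {f ≤ c}` and `T = U ∩ {c ≤ f}`. Let `b`, `e`, `q` be the
numbers of vertices of `U` below, on and above the hyperplane, so that `b + e + q = n + 1`. The
extreme points of `U ∩ {f ≤ c}` include the `b + e` vertices with `f ≤ c` and the `b * q` points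
where the hyperplane crosses an edge from a vertex below to a vertex above. The simplex `S` has only
`n + 1` extreme points, so `b * q ≤ q`; symmetrically `b * q ≤ b`, hence `b = q = 1` and
`e = n - 1`. Then these `n + 1` points are exactly the vertices of `S`, all of them on the
hyperplane except the one vertex below it, so `S ∩ T = U ∩ {f = c}` is the facet of `S` opposite to
that vertex, and likewise for `T`; the `e` vertices of `U` on the hyperplane span the
`(n - 2)`-face. The extreme points are counted in barycentric coordinates with respect to `U`.
-/

open scoped Finset

section NormedSpace

variable {E : Type*} [NormedAddCommGroup E] [NormedSpace ℝ E] {s t : Set E} {x z : E}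

theorem mem_intrinsicInterior_iff_exists_ball :
    x ∈ intrinsicInterior ℝ s ↔
      x ∈ s ∧ ∃ ε > 0, ∀ y ∈ affineSpan ℝ s, dist y x < ε → y ∈ s := by
  constructor
  · rintro ⟨y, hy, rfl⟩
    obtain ⟨ε, hε, hball⟩ := Metric.mem_nhds_iff.1 (mem_interior_iff_mem_nhds.1 hy)
    exact ⟨interior_subset (s := ((↑) ⁻¹' s : Set (affineSpan ℝ s))) hy, ε, hε,
      fun z hz hd => hball (show (⟨z, hz⟩ : affineSpan ℝ s) ∈ _ from hd)⟩
  · rintro ⟨hxs, ε, hε, hball⟩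
    refine ⟨⟨x, subset_affineSpan ℝ s hxs⟩, ?_, rfl⟩
    exact mem_interior_iff_mem_nhds.2 <|
      Metric.mem_nhds_iff.2 ⟨ε, hε, fun y hy => hball y y.2 hy⟩

theorem Convex.openSegment_subset_intrinsicInterior (hs : Convex ℝ s) (hx : x ∈ s)
    (hz : z ∈ intrinsicInterior ℝ s) : openSegment ℝ x z ⊆ intrinsicInterior ℝ s := by
  rintro _ ⟨a, b, ha, hb, hab, rfl⟩
  obtain ⟨hzs, ε, hε, hball⟩ := mem_intrinsicInterior_iff_exists_ball.1 hz
  have hy : a • x + b • z ∈ s := hs hx hzs ha.le hb.le hab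
  refine mem_intrinsicInterior_iff_exists_ball.2 ⟨hy, b * ε, mul_pos hb hε, fun y' hy' hd => ?_⟩
  -- `y'` is the same combination of `x` and a point `z'` that is `ε`-close to `z`.
  set z' := b⁻¹ • (y' - (a • x + b • z)) + z
  have hz'A : z' ∈ affineSpan ℝ s :=
    AffineSubspace.vadd_mem_of_mem_direction
      (Submodule.smul_mem _ _ (AffineSubspace.vsub_mem_direction hy' (subset_affineSpan ℝ s hy)))
      (subset_affineSpan ℝ s hzs)
  have hz's : z' ∈ s := by
    refine hball z' hz'A ?_
    rw [dist_eq_norm, add_sub_cancel_right, norm_smul, Real.norm_eq_abs, abs_inv,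
      abs_of_pos hb, ← dist_eq_norm, inv_mul_lt_iff₀ hb]
    exact hd
  convert hs hx hz's ha.le hb.le hab using 1
  simp only [z', smul_add, smul_smul, mul_inv_cancel₀ hb.ne', one_smul]
  abel

protected theorem Convex.intrinsicInterior (hs : Convex ℝ s) :
    Convex ℝ (intrinsicInterior ℝ s) :=
  convex_iff_openSegment_subset.2 fun _ hx _ hz =>
    hs.openSegment_subset_intrinsicInterior (intrinsicInterior_subset hx) hz

theorem Convex.subset_closure_intrinsicInterior [FiniteDimensional ℝ E] (hs : Convex ℝ s)
    (hne : s.Nonempty) : s ⊆ closure (intrinsicInterior ℝ s) := by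
  obtain ⟨z, hz⟩ := hne.intrinsicInterior hs
  intro x hx
  exact closure_mono (hs.openSegment_subset_intrinsicInterior hx hz)
    (segment_subset_closure_openSegment (left_mem_segment ℝ x z))

theorem eq_union_inter_setOf_le {f : E →ₗ[ℝ] ℝ} {c : ℝ} (hsc : IsClosed s)
    (hst : Convex ℝ (s ∪ t)) (hs : ∀ x ∈ s, f x ≤ c) (ht : ∀ y ∈ t, c ≤ f y)
    (hz : z ∈ s) (hfz : f z < c) : s = (s ∪ t) ∩ {x | f x ≤ c} := by
  refine subset_antisymm (fun x hx => ⟨Or.inl hx, hs x hx⟩) ?_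
  rintro x ⟨hx, hfx⟩
  have hseg : openSegment ℝ x z ⊆ s := by
    rintro _ ⟨a, b, ha, hb, hab, rfl⟩
    have hlt : f (a • x + b • z) < c := by
      rw [map_add, map_smul, map_smul, smul_eq_mul, smul_eq_mul]
      have hc : a * c + b * c = c := by rw [← add_mul, hab, one_mul]
      linarith [mul_le_mul_of_nonneg_left (show f x ≤ c from hfx) ha.le,
        mul_lt_mul_of_pos_left hfz hb]
    exact (hst hx (Or.inl hz) ha.le hb.le hab).resolve_right fun hy => (ht _ hy).not_gt hlt
  exact hsc.closure_subset_iff.2 hseg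
    (segment_subset_closure_openSegment (left_mem_segment ℝ x z))

end NormedSpace

section InnerProductSpace

variable {E : Type*} [NormedAddCommGroup E] [InnerProductSpace ℝ E] {s t : Set E}

theorem isOpen_coe_preimage_intrinsicInterior {A : AffineSubspace ℝ E}
    (hs : affineSpan ℝ s = A) : IsOpen ((↑) ⁻¹' intrinsicInterior ℝ s : Set A) := by
  subst hs
  rw [intrinsicInterior, Subtype.val_injective.preimage_image]
  exact isOpen_interior

theorem exists_lt_lt_of_disjoint_intrinsicInterior [FiniteDimensional ℝ E] (hs : Convex ℝ s)
    (ht : Convex ℝ t) (hne : s.Nonempty) (hst : affineSpan ℝ s = affineSpan ℝ t)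
    (hdisj : Disjoint (intrinsicInterior ℝ s) (intrinsicInterior ℝ t)) :
    ∃ (f : E →L[ℝ] ℝ) (c : ℝ), (∀ x ∈ intrinsicInterior ℝ s, f x < c) ∧
      ∀ y ∈ intrinsicInterior ℝ t, c < f y := by
  set A := affineSpan ℝ s
  obtain ⟨x₀, hx₀⟩ := hne
  have : Nonempty A := ⟨⟨x₀, subset_affineSpan ℝ s hx₀⟩⟩
  -- Pulled back along the orthogonal projection onto `A`, the relative interiors become open.
  let π := EuclideanGeometry.orthogonalProjection A
  let P : Set E → Set E := fun w => (A.subtype.comp π.toAffineMap) ⁻¹' intrinsicInterior ℝ w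
  have hopen : ∀ w, affineSpan ℝ w = A → IsOpen (P w) := fun w hw =>
    (isOpen_coe_preimage_intrinsicInterior hw).preimage π.continuous
  have hconv : ∀ w, Convex ℝ w → Convex ℝ (P w) := fun w hw =>
    hw.intrinsicInterior.affine_preimage _
  have hsub : ∀ w, affineSpan ℝ w = A → intrinsicInterior ℝ w ⊆ P w := fun w hw x hx => by
    show (π x : E) ∈ intrinsicInterior ℝ w
    rw [EuclideanGeometry.orthogonalProjection_eq_self_iff.2
      (hw ▸ subset_affineSpan ℝ w (intrinsicInterior_subset hx))]
    exact hx
  obtain ⟨f, c, hfs, hft⟩ := geometric_hahn_banach_open_open (hconv s hs) (hopen s rfl)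
    (hconv t ht) (hopen t hst.symm) (hdisj.preimage _)
  exact ⟨f, c, fun x hx => hfs x (hsub s rfl hx), fun y hy => hft y (hsub t hst.symm hy)⟩

theorem exists_eq_inter_halfspaces_of_union [FiniteDimensional ℝ E] (hs : Convex ℝ s)
    (hsc : IsClosed s) (hsne : s.Nonempty) (ht : Convex ℝ t) (htc : IsClosed t)
    (htne : t.Nonempty) (hst : Convex ℝ (s ∪ t)) (hspan : affineSpan ℝ s = affineSpan ℝ t)
    (hdisj : Disjoint (intrinsicInterior ℝ s) (intrinsicInterior ℝ t)) :
    ∃ (f : E →ₗ[ℝ] ℝ) (c : ℝ), s = (s ∪ t) ∩ {x | f x ≤ c} ∧ t = (s ∪ t) ∩ {x | c ≤ f x} ∧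
      (∃ x ∈ s, f x < c) ∧ ∃ y ∈ t, c < f y := by
  obtain ⟨f, c, hfs, hft⟩ := exists_lt_lt_of_disjoint_intrinsicInterior hs ht hsne hspan hdisj
  obtain ⟨x, hx⟩ := hsne.intrinsicInterior hs
  obtain ⟨y, hy⟩ := htne.intrinsicInterior ht
  have hsle : ∀ x ∈ s, f x ≤ c := fun x' hx' =>
    closure_minimal (fun x hx => (hfs x hx).le) (isClosed_le f.continuous continuous_const)
      (hs.subset_closure_intrinsicInterior hsne hx')
  have htge : ∀ y ∈ t, c ≤ f y := fun y' hy' =>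
    closure_minimal (fun y hy => (hft y hy).le) (isClosed_le continuous_const f.continuous)
      (ht.subset_closure_intrinsicInterior htne hy')
  refine ⟨f, c, eq_union_inter_setOf_le (f := f) hsc hst hsle htge
    (intrinsicInterior_subset hx) (hfs x hx), ?_, ⟨x, intrinsicInterior_subset hx, hfs x hx⟩,
    ⟨y, intrinsicInterior_subset hy, hft y hy⟩⟩
  have := eq_union_inter_setOf_le (f := -(f : E →ₗ[ℝ] ℝ)) (c := -c) htc
    (Set.union_comm s t ▸ hst) (fun y hy => neg_le_neg (htge y hy))
    (fun x hx => neg_le_neg (hsle x hx)) (intrinsicInterior_subset hy) (neg_lt_neg (hft y hy))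
  simpa [Set.union_comm] using this

end InnerProductSpace

theorem lineMap_sub_div_sub {x y : ℝ} (c : ℝ) (h : x ≠ y) :
    AffineMap.lineMap x y ((c - x) / (y - x)) = c := by
  rw [AffineMap.lineMap_apply_ring', div_mul_cancel₀ _ (sub_ne_zero.2 h.symm)]
  ring

theorem eq_zero_of_mem_openSegment {ι : Type*} {w w₁ w₂ : ι → ℝ} (h₁ : ∀ l, 0 ≤ w₁ l)
    (h₂ : ∀ l, 0 ≤ w₂ l) (hw : w ∈ openSegment ℝ w₁ w₂) {l : ι} (hl : w l = 0) :
    w₁ l = 0 ∧ w₂ l = 0 := by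
  obtain ⟨α, β, hα, hβ, -, rfl⟩ := hw
  have : α * w₁ l + β * w₂ l = 0 := hl
  constructor <;> nlinarith [h₁ l, h₂ l, mul_nonneg hα.le (h₁ l), mul_nonneg hβ.le (h₂ l)]

theorem card_filter_le_add_card_filter_lt {ι : Type*} [Fintype ι] (a : ι → ℝ) (c : ℝ) :
    #{i | a i ≤ c} + #{j | c < a j} = Fintype.card ι := by
  simpa only [not_le, Finset.card_univ] using
    Finset.card_filter_add_card_filter_not (s := Finset.univ) fun i => a i ≤ c

theorem card_filter_lt_eq_one_of_card_le {ι : Type*} [Fintype ι] {a : ι → ℝ} {c : ℝ}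
    (hlt : ∃ i, a i < c) (hgt : ∃ j, c < a j)
    (hle : #{i | a i ≤ c} + #{i | a i < c} * #{j | c < a j} ≤ Fintype.card ι)
    (hge : #{i | c ≤ a i} + #{i | c < a i} * #{j | a j < c} ≤ Fintype.card ι) :
    #{i | a i < c} = 1 ∧ #{j | c < a j} = 1 ∧ #{k | a k = c} + 2 = Fintype.card ι := by
  have hle_add := card_filter_le_add_card_filter_lt a c
  have hge_add : #{i | c ≤ a i} + #{j | a j < c} = Fintype.card ι := by
    simpa only [Pi.neg_apply, neg_le_neg_iff, neg_lt_neg_iff] using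
      card_filter_le_add_card_filter_lt (-a) (-c)
  have hle_split : #{i | a i ≤ c} = #{i | a i < c} + #{k | a k = c} := by
    rw [← Finset.card_union_of_disjoint (Finset.disjoint_filter.2 fun i _ h h' => h.ne h'),
      ← Finset.filter_or]
    simp only [le_iff_lt_or_eq]
  have hb : 0 < #{i | a i < c} :=
    Finset.card_pos.2 (by obtain ⟨i, hi⟩ := hlt; exact ⟨i, by simpa using hi⟩)
  have hq : 0 < #{j | c < a j} :=
    Finset.card_pos.2 (by obtain ⟨j, hj⟩ := hgt; exact ⟨j, by simpa using hj⟩)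
  have hb1 : #{i | a i < c} = 1 := by nlinarith
  have hq1 : #{j | c < a j} = 1 := by nlinarith
  exact ⟨hb1, hq1, by omega⟩

section StdSimplex

variable {ι : Type*} [Fintype ι] [DecidableEq ι] {a : ι → ℝ} {c : ℝ} {i j k : ι}

def stdSimplexCut (a : ι → ℝ) (c : ℝ) : Set (ι → ℝ) := {w ∈ stdSimplex ℝ ι | w ⬝ᵥ a ≤ c}

/-- The point where the edge of the standard simplex from vertex `i` to vertex `j` meets the
hyperplane `w ⬝ᵥ a = c`. -/
noncomputable def edgeCrossing (a : ι → ℝ) (c : ℝ) (i j : ι) : ι → ℝ :=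
  AffineMap.lineMap (Pi.single i 1 : ι → ℝ) (Pi.single j 1) ((c - a i) / (a j - a i))

noncomputable def cutVertices (a : ι → ℝ) (c : ℝ) : Finset (ι → ℝ) :=
  ({k | a k ≤ c} : Finset ι).image (fun k => (Pi.single k 1 : ι → ℝ)) ∪
    (({i | a i < c} : Finset ι) ×ˢ ({j | c < a j} : Finset ι)).image
      fun p => edgeCrossing a c p.1 p.2

theorem eq_single_of_mem_stdSimplex {w : ι → ℝ} (hw : w ∈ stdSimplex ℝ ι)
    (h : ∀ l, l ≠ k → w l = 0) : w = Pi.single k 1 := by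
  have hk : w k = 1 := by
    rw [← hw.2, Finset.sum_eq_single k (fun l _ hl => h l hl) (by simp)]
  funext l
  by_cases hl : l = k
  · subst hl; simp [hk]
  · simp [hl, h l hl]

theorem eq_lineMap_single_of_mem_stdSimplex {w : ι → ℝ} (hw : w ∈ stdSimplex ℝ ι) (hij : i ≠ j)
    (h : ∀ l, l ≠ i → l ≠ j → w l = 0) :
    w = AffineMap.lineMap (Pi.single i 1 : ι → ℝ) (Pi.single j 1) (w j) := by
  have hsum : w i + w j = 1 := by
    rw [← hw.2, Finset.sum_eq_add_of_mem i j (Finset.mem_univ i) (Finset.mem_univ j) hij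
      fun l _ hl => h l hl.1 hl.2]
  funext l
  rw [AffineMap.lineMap_apply_module]
  by_cases hli : l = i
  · subst hli; simp [hij]; linarith
  by_cases hlj : l = j
  · subst hlj; simp [hli]
  · simp [hli, hlj, h l hli hlj]

theorem lineMap_single_dotProduct (s : ℝ) :
    AffineMap.lineMap (Pi.single i 1 : ι → ℝ) (Pi.single j 1) s ⬝ᵥ a =
      AffineMap.lineMap (a i) (a j) s := by
  simp [AffineMap.lineMap_apply_module, add_dotProduct, smul_dotProduct, single_dotProduct]

theorem edgeCrossing_dotProduct (h : a i ≠ a j) : edgeCrossing a c i j ⬝ᵥ a = c := by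
  rw [edgeCrossing, lineMap_single_dotProduct, lineMap_sub_div_sub c h]

omit [Fintype ι] in
theorem edgeCrossing_apply_ne_zero_iff (hi : a i < c) (hj : c < a j) {l : ι} :
    edgeCrossing a c i j l ≠ 0 ↔ l = i ∨ l = j := by
  have hij : i ≠ j := by rintro rfl; linarith
  have ht0 : 0 < (c - a i) / (a j - a i) := div_pos (by linarith) (by linarith)
  have ht1 : (c - a i) / (a j - a i) < 1 := (div_lt_one (by linarith)).2 (by linarith)
  rw [edgeCrossing, AffineMap.lineMap_apply_module]
  by_cases hli : l = i
  · subst hli; simp [hij]; linarith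
  by_cases hlj : l = j
  · subst hlj; simp [hli, ht0.ne']
  · simp [hli, hlj]

theorem edgeCrossing_mem_stdSimplex (hi : a i < c) (hj : c < a j) :
    edgeCrossing a c i j ∈ stdSimplex ℝ ι := by
  have ht0 : 0 ≤ (c - a i) / (a j - a i) := div_nonneg (by linarith) (by linarith)
  have ht1 : (c - a i) / (a j - a i) ≤ 1 := (div_le_one (by linarith)).2 (by linarith)
  exact (convex_stdSimplex ℝ ι).lineMap_mem (single_mem_stdSimplex ℝ i)
    (single_mem_stdSimplex ℝ j) ⟨ht0, ht1⟩

theorem single_mem_extremePoints_stdSimplexCut (hk : a k ≤ c) :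
    (Pi.single k 1 : ι → ℝ) ∈ (stdSimplexCut a c).extremePoints ℝ := by
  refine mem_extremePoints.2 ⟨⟨single_mem_stdSimplex ℝ k, by simpa [single_dotProduct]⟩,
    fun w₁ h₁ w₂ h₂ hw => ?_⟩
  have hzero := fun l (hl : l ≠ k) =>
    eq_zero_of_mem_openSegment h₁.1.1 h₂.1.1 hw (l := l) (by simp [hl])
  exact ⟨eq_single_of_mem_stdSimplex h₁.1 fun l hl => (hzero l hl).1,
    eq_single_of_mem_stdSimplex h₂.1 fun l hl => (hzero l hl).2⟩

theorem edgeCrossing_mem_extremePoints_stdSimplexCut (hi : a i < c) (hj : c < a j) :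
    edgeCrossing a c i j ∈ (stdSimplexCut a c).extremePoints ℝ := by
  have hij : i ≠ j := by rintro rfl; linarith
  have hne : a i ≠ a j := by linarith
  refine mem_extremePoints.2 ⟨⟨edgeCrossing_mem_stdSimplex hi hj,
    (edgeCrossing_dotProduct hne).le⟩, fun w₁ h₁ w₂ h₂ hw => ?_⟩
  -- Both endpoints lie on the hyperplane and on the edge `[i, j]`, which meet only once.
  have hval : w₁ ⬝ᵥ a = c ∧ w₂ ⬝ᵥ a = c := by
    obtain ⟨α, β, hα, hβ, hαβ, hw⟩ := hw
    have hc : α * (w₁ ⬝ᵥ a) + β * (w₂ ⬝ᵥ a) = c := by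
      rw [← edgeCrossing_dotProduct (c := c) hne, ← hw, add_dotProduct, smul_dotProduct,
        smul_dotProduct, smul_eq_mul, smul_eq_mul]
    have hc' : α * c + β * c = c := by rw [← add_mul, hαβ, one_mul]
    constructor <;> nlinarith [h₁.2, h₂.2]
  have hedge : ∀ w ∈ stdSimplexCut a c, w ⬝ᵥ a = c → (∀ l, l ≠ i → l ≠ j → w l = 0) →
      w = edgeCrossing a c i j := by
    intro w hw hwa hsupp
    have hw' := eq_lineMap_single_of_mem_stdSimplex hw.1 hij hsupp
    rw [hw', lineMap_single_dotProduct, ← lineMap_sub_div_sub c hne] at hwa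
    rw [hw', edgeCrossing, AffineMap.lineMap_injective ℝ hne hwa]
  have hsupp : ∀ l, l ≠ i → l ≠ j → edgeCrossing a c i j l = 0 := fun l hli hlj => by
    by_contra h
    exact ((edgeCrossing_apply_ne_zero_iff hi hj).1 h).elim hli hlj
  exact ⟨hedge w₁ h₁ hval.1 fun l hli hlj =>
      (eq_zero_of_mem_openSegment h₁.1.1 h₂.1.1 hw (hsupp l hli hlj)).1,
    hedge w₂ h₂ hval.2 fun l hli hlj =>
      (eq_zero_of_mem_openSegment h₁.1.1 h₂.1.1 hw (hsupp l hli hlj)).2⟩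

theorem cutVertices_subset_extremePoints :
    ↑(cutVertices a c) ⊆ (stdSimplexCut a c).extremePoints ℝ := by
  intro w hw
  rcases Finset.mem_union.1 hw with hw | hw
  · obtain ⟨k, hk, rfl⟩ := Finset.mem_image.1 hw
    exact single_mem_extremePoints_stdSimplexCut (Finset.mem_filter.1 hk).2
  · obtain ⟨⟨i, j⟩, hij, rfl⟩ := Finset.mem_image.1 hw
    simp only [Finset.mem_product, Finset.mem_filter, Finset.mem_univ, true_and] at hij
    exact edgeCrossing_mem_extremePoints_stdSimplexCut hij.1 hij.2

theorem card_cutVertices :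
    #(cutVertices a c) = #{k | a k ≤ c} + #{i | a i < c} * #{j | c < a j} := by
  have hsupp {i j : ι} (hi : a i < c) (hj : c < a j) {w : ι → ℝ}
      (hw : edgeCrossing a c i j = w) : w i ≠ 0 ∧ w j ≠ 0 :=
    hw ▸ ⟨(edgeCrossing_apply_ne_zero_iff hi hj).2 (.inl rfl),
      (edgeCrossing_apply_ne_zero_iff hi hj).2 (.inr rfl)⟩
  rw [cutVertices, Finset.card_union_of_disjoint, Finset.card_image_of_injective,
    Finset.card_image_of_injOn, Finset.card_product]
  · rintro ⟨i, j⟩ hij ⟨i', j'⟩ hij' h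
    simp only [Finset.coe_product, Finset.coe_filter, Set.mem_prod, Set.mem_ofPred_eq,
      Finset.mem_univ, true_and] at hij hij'
    have hi := (edgeCrossing_apply_ne_zero_iff hij'.1 hij'.2).1 (hsupp hij.1 hij.2 h).1
    have hj := (edgeCrossing_apply_ne_zero_iff hij'.1 hij'.2).1 (hsupp hij.1 hij.2 h).2
    obtain rfl : i = i' := hi.resolve_right (by rintro rfl; linarith)
    obtain rfl : j = j' := hj.resolve_left (by rintro rfl; linarith)
    rfl
  · intro k k' h
    simpa [Pi.single_apply, eq_comm] using congrFun h k
  · refine Finset.disjoint_left.2 fun w hw hw' => ?_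
    obtain ⟨k, -, rfl⟩ := Finset.mem_image.1 hw
    obtain ⟨⟨i, j⟩, hij, h⟩ := Finset.mem_image.1 hw'
    simp only [Finset.mem_product, Finset.mem_filter, Finset.mem_univ, true_and] at hij
    have := hsupp hij.1 hij.2 h
    simp only [Pi.single_apply, ne_eq, ite_eq_right_iff, not_forall] at this
    obtain ⟨⟨rfl, -⟩, ⟨rfl, -⟩⟩ := this
    linarith [hij.1, hij.2]

end StdSimplex

section Barycentric

variable {E : Type*} [AddCommGroup E] [Module ℝ E] {ι ι' : Type*} [Fintype ι] [DecidableEq ι]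
  [Fintype ι'] {u : ι → E} {f : E →ₗ[ℝ] ℝ} {c : ℝ}

omit [Fintype ι'] in
theorem convexHull_range_eq_image_stdSimplex (u : ι → E) :
    convexHull ℝ (range u) = Fintype.linearCombination ℝ u '' stdSimplex ℝ ι := by
  rw [← convexHull_basis_eq_stdSimplex, LinearMap.image_convexHull, ← Set.range_comp]
  congr 2
  funext i
  simp [Fintype.linearCombination_apply]

omit [DecidableEq ι] [Fintype ι'] in
theorem AffineIndependent.injOn_linearCombination_stdSimplex (hu : AffineIndependent ℝ u) :
    InjOn (Fintype.linearCombination ℝ u) (stdSimplex ℝ ι) := fun w hw w' hw' h =>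
  (affineIndependent_iff_eq_of_fintype_affineCombination_eq ℝ u).1 hu w w' hw.2 hw'.2 <| by
    rw [Finset.affineCombination_eq_linear_combination _ _ _ hw.2,
      Finset.affineCombination_eq_linear_combination _ _ _ hw'.2]
    simpa [Fintype.linearCombination_apply] using h

omit [Fintype ι] [DecidableEq ι] [Fintype ι'] in
theorem LinearMap.image_extremePoints_subset_of_injOn {F : Type*} [AddCommGroup F] [Module ℝ F]
    (g : F →ₗ[ℝ] E) {K A : Set F} (hK : Convex ℝ K) (hg : InjOn g K) (hA : A ⊆ K) :
    g '' A.extremePoints ℝ ⊆ (g '' A).extremePoints ℝ := by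
  rintro _ ⟨x, hx, rfl⟩
  refine mem_extremePoints.2 ⟨mem_image_of_mem g hx.1, ?_⟩
  rintro _ ⟨x₁, h₁, rfl⟩ _ ⟨x₂, h₂, rfl⟩ ⟨a, b, ha, hb, hab, h⟩
  have hx' : a • x₁ + b • x₂ = x :=
    hg (hK (hA h₁) (hA h₂) ha.le hb.le hab) (hA hx.1) (by simpa using h)
  obtain ⟨rfl, rfl⟩ := (mem_extremePoints.1 hx).2 x₁ h₁ x₂ h₂ ⟨a, b, ha, hb, hab, hx'⟩
  exact ⟨rfl, rfl⟩

omit [DecidableEq ι] [Fintype ι'] in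
theorem apply_linearCombination (w : ι → ℝ) :
    f (Fintype.linearCombination ℝ u w) = w ⬝ᵥ (f ∘ u) := by
  simp [Fintype.linearCombination_apply, dotProduct]

omit [Fintype ι] [DecidableEq ι] [Fintype ι'] in
theorem exists_apply_lt_of_mem_convexHull {x : E} (hx : x ∈ convexHull ℝ (range u))
    (hfx : f x < c) : ∃ i, f (u i) < c := by
  obtain ⟨_, ⟨i, rfl⟩, hi⟩ := (f.concaveOn (convex_convexHull ℝ _)).exists_le_of_mem_convexHull
    (subset_convexHull ℝ _) hx
  exact ⟨i, hi.trans_lt hfx⟩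

omit [Fintype ι] [DecidableEq ι] [Fintype ι'] in
theorem exists_lt_apply_of_mem_convexHull {x : E} (hx : x ∈ convexHull ℝ (range u))
    (hfx : c < f x) : ∃ i, c < f (u i) := by
  obtain ⟨_, ⟨i, rfl⟩, hi⟩ := (f.convexOn (convex_convexHull ℝ _)).exists_ge_of_mem_convexHull
    (subset_convexHull ℝ _) hx
  exact ⟨i, hfx.trans_le hi⟩

omit [Fintype ι'] in
theorem convexHull_range_inter_setOf_le (u : ι → E) (f : E →ₗ[ℝ] ℝ) (c : ℝ) :
    convexHull ℝ (range u) ∩ {x | f x ≤ c} =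
      Fintype.linearCombination ℝ u '' stdSimplexCut (f ∘ u) c := by
  rw [convexHull_range_eq_image_stdSimplex, ← image_inter_preimage]
  congr 1
  ext w
  simp [stdSimplexCut, apply_linearCombination]

omit [Fintype ι] [DecidableEq ι] in
theorem convexHull_range_inter_setOf_eq (v : ι' → E) (hv : ∀ l, f (v l) ≤ c) :
    convexHull ℝ (range v) ∩ {x | f x = c} = convexHull ℝ (v '' {l | f (v l) = c}) := by
  refine subset_antisymm ?_ (convexHull_min ?_
    ((convex_convexHull ℝ _).inter (convex_hyperplane f.isLinear c)))
  · rintro _ ⟨hx, hfx⟩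
    rw [convexHull_range_eq_image_stdSimplex] at hx
    obtain ⟨w, hw, rfl⟩ := hx
    -- Since `f ≤ c` at every vertex, the weights vanish off the hyperplane.
    have hzero : ∀ l, f (v l) ≠ c → w l = 0 := by
      have hsum : ∑ l, w l * (c - f (v l)) = 0 := by
        have : w ⬝ᵥ (f ∘ v) = c := (apply_linearCombination w).symm.trans hfx
        simp only [mul_sub, Finset.sum_sub_distrib, ← Finset.sum_mul, hw.2, one_mul]
        rw [← this]
        simp [dotProduct]
      intro l hl
      have := (Finset.sum_eq_zero_iff_of_nonneg fun l _ =>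
        mul_nonneg (hw.1 l) (sub_nonneg.2 (hv l))).1 hsum l (Finset.mem_univ l)
      exact (mul_eq_zero.1 this).resolve_right (sub_ne_zero.2 (Ne.symm hl))
    rw [Fintype.linearCombination_apply, ← Finset.sum_filter_of_ne (p := fun l => f (v l) = c)
      fun l _ h => by_contra fun hl => h (by rw [hzero l hl, zero_smul])]
    refine (convex_convexHull ℝ _).sum_mem (fun l _ => hw.1 l) ?_ fun l hl =>
      subset_convexHull ℝ _ (mem_image_of_mem v (Finset.mem_filter.1 hl).2)
    rw [Finset.sum_filter_of_ne fun l _ h => by_contra fun hl => h (hzero l hl)]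
    exact hw.2
  · rintro _ ⟨l, hl, rfl⟩
    exact ⟨subset_convexHull ℝ _ (mem_range_self l), hl⟩

omit [Fintype ι'] in
theorem vertex_mem_image_cutVertices {k : ι} (hk : f (u k) ≤ c) :
    u k ∈ (cutVertices (f ∘ u) c).image (Fintype.linearCombination ℝ u) :=
  Finset.mem_image.2 ⟨Pi.single k 1,
    Finset.mem_union_left _ (Finset.mem_image.2 ⟨k, by simpa using hk, rfl⟩), by simp⟩

omit [Fintype ι'] in
theorem exists_eq_vertex_of_mem_image_cutVertices {x : E}
    (hx : x ∈ (cutVertices (f ∘ u) c).image (Fintype.linearCombination ℝ u)) (hfx : f x < c) :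
    ∃ k, f (u k) < c ∧ u k = x := by
  obtain ⟨w, hw, rfl⟩ := Finset.mem_image.1 hx
  rcases Finset.mem_union.1 hw with hw | hw
  · obtain ⟨k, -, rfl⟩ := Finset.mem_image.1 hw
    rw [Fintype.linearCombination_apply_single, one_smul] at hfx ⊢
    exact ⟨k, hfx, rfl⟩
  · obtain ⟨⟨a, b⟩, hab, rfl⟩ := Finset.mem_image.1 hw
    simp only [Finset.mem_product, Finset.mem_filter, Finset.mem_univ, true_and] at hab
    rw [apply_linearCombination, edgeCrossing_dotProduct (hab.1.trans hab.2).ne] at hfx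
    exact absurd hfx (lt_irrefl c)

omit [Fintype ι'] in
theorem AffineIndependent.card_image_cutVertices (hu : AffineIndependent ℝ u) :
    #((cutVertices (f ∘ u) c).image (Fintype.linearCombination ℝ u)) =
      #{i | f (u i) ≤ c} + #{i | f (u i) < c} * #{j | c < f (u j)} := by
  rw [Finset.card_image_of_injOn (hu.injOn_linearCombination_stdSimplex.mono fun w hw =>
    (extremePoints_subset (cutVertices_subset_extremePoints hw)).1), card_cutVertices]
  rfl

theorem AffineIndependent.image_cutVertices_subset (hu : AffineIndependent ℝ u) {v : ι' → E}
    (hv : convexHull ℝ (range u) ∩ {x | f x ≤ c} = convexHull ℝ (range v)) :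
    (cutVertices (f ∘ u) c).image (Fintype.linearCombination ℝ u) ⊆ Finset.univ.image v := by
  intro x hx
  obtain ⟨w, hw, rfl⟩ := Finset.mem_image.1 hx
  have := LinearMap.image_extremePoints_subset_of_injOn _ (convex_stdSimplex ℝ ι)
    hu.injOn_linearCombination_stdSimplex (fun _ h => h.1)
    (mem_image_of_mem _ (cutVertices_subset_extremePoints hw))
  rw [← convexHull_range_inter_setOf_le, hv] at this
  obtain ⟨l, hl⟩ := extremePoints_convexHull_subset this
  exact Finset.mem_image.2 ⟨l, Finset.mem_univ l, hl⟩

theorem AffineIndependent.card_add_card_mul_card_le (hu : AffineIndependent ℝ u) {v : ι' → E}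
    (hv : convexHull ℝ (range u) ∩ {x | f x ≤ c} = convexHull ℝ (range v)) :
    #{i | f (u i) ≤ c} + #{i | f (u i) < c} * #{j | c < f (u j)} ≤ Fintype.card ι' := by
  rw [← hu.card_image_cutVertices]
  exact (Finset.card_le_card (hu.image_cutVertices_subset hv)).trans Finset.card_image_le

theorem AffineIndependent.exists_inter_hyperplane_eq_facet (hu : AffineIndependent ℝ u)
    {v : ι' → E} (hvinj : Function.Injective v)
    (hv : convexHull ℝ (range u) ∩ {x | f x ≤ c} = convexHull ℝ (range v))
    (hB : #{i | f (u i) < c} = 1) (hQ : #{j | c < f (u j)} = 1)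
    (hcard : Fintype.card ι' = Fintype.card ι) :
    ∃ i, convexHull ℝ (range u) ∩ {x | f x = c} = convexHull ℝ (v '' {i}ᶜ) := by
  -- By counting, the vertices of the cut are exactly the vertices of `v`.
  have hP : (cutVertices (f ∘ u) c).image (Fintype.linearCombination ℝ u) =
      Finset.univ.image v := Finset.eq_of_subset_of_card_le
    (hu.image_cutVertices_subset hv) (by
      rw [hu.card_image_cutVertices, Finset.card_image_of_injective _ hvinj, hB, hQ,
        Finset.card_univ, hcard, ← card_filter_le_add_card_filter_lt (f ∘ u) c]
      simp only [Function.comp_apply, hQ, mul_one, le_refl])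
  have hvc : ∀ l, f (v l) ≤ c := fun l => by
    have : v l ∈ convexHull ℝ (range v) := subset_convexHull ℝ _ (mem_range_self l)
    rw [← hv] at this
    exact this.2
  obtain ⟨p, hp⟩ := Finset.card_eq_one.1 hB
  have hpc : f (u p) < c := by
    have : p ∈ ({i | f (u i) < c} : Finset ι) := hp ▸ Finset.mem_singleton_self p
    exact (Finset.mem_filter.1 this).2
  obtain ⟨i, -, hi⟩ := Finset.mem_image.1 (hP ▸ vertex_mem_image_cutVertices hpc.le)
  refine ⟨i, ?_⟩
  have hface : convexHull ℝ (range u) ∩ {x | f x = c} =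
      convexHull ℝ (range v) ∩ {x | f x = c} := by
    rw [← hv, inter_assoc, (inter_eq_right (s := {x | f x ≤ c}) (t := {x | f x = c})).2
      fun x hx => le_of_eq hx]
  rw [hface, convexHull_range_inter_setOf_eq v hvc]
  congr 2
  ext l
  simp only [mem_ofPred_eq, mem_compl_iff, mem_singleton_iff]
  refine ⟨fun h hl => (hl ▸ hi ▸ hpc).ne h,
    fun hl => (hvc l).lt_or_eq.resolve_left fun hlt => ?_⟩
  obtain ⟨k, hk, hkl⟩ := exists_eq_vertex_of_mem_image_cutVertices
    (hP ▸ Finset.mem_image_of_mem v (Finset.mem_univ l)) hlt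
  have hkp : k = p := Finset.mem_singleton.1 (hp ▸ Finset.mem_filter.2 ⟨Finset.mem_univ k, hk⟩)
  exact hl (hvinj (hkl.symm.trans ((congrArg u hkp).trans hi.symm)))

end Barycentric

section IsSimplex

variable {N n : ℕ} {s t : Set (Euc N)}

theorem IsSimplex.convex (hs : IsSimplex n s) : Convex ℝ s := by
  obtain ⟨v, -, rfl⟩ := hs
  exact convex_convexHull ℝ _

theorem IsSimplex.isClosed (hs : IsSimplex n s) : IsClosed s := by
  obtain ⟨v, -, rfl⟩ := hs
  exact ((Set.finite_range v).isCompact_convexHull (𝕜 := ℝ)).isClosed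

theorem IsSimplex.nonempty (hs : IsSimplex n s) : s.Nonempty := by
  obtain ⟨v, -, rfl⟩ := hs
  exact ⟨v 0, subset_convexHull ℝ _ (mem_range_self 0)⟩

theorem IsSimplex.affineSpan_eq_of_subset (hs : IsSimplex n s) (ht : IsSimplex n t)
    (hst : s ⊆ t) : affineSpan ℝ s = affineSpan ℝ t := by
  obtain ⟨v, hv, rfl⟩ := hs
  obtain ⟨w, hw, rfl⟩ := ht
  rw [affineSpan_convexHull, affineSpan_convexHull]
  refine hv.affineSpan_eq_of_le_of_card_eq_finrank_add_one ?_ ?_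
  · rw [← affineSpan_convexHull (range v), ← affineSpan_convexHull (range w)]
    exact affineSpan_mono ℝ hst
  · rw [direction_affineSpan, hw.finrank_vectorSpan (Fintype.card_fin _), Fintype.card_fin]

theorem IsSimplex.exists_eq_inter_halfspaces_of_union (hs : IsSimplex n s) (ht : IsSimplex n t)
    (hst : IsSimplex n (s ∪ t))
    (hdisj : Disjoint (intrinsicInterior ℝ s) (intrinsicInterior ℝ t)) :
    ∃ (f : Euc N →ₗ[ℝ] ℝ) (c : ℝ), s = (s ∪ t) ∩ {x | f x ≤ c} ∧
      t = (s ∪ t) ∩ {x | c ≤ f x} ∧ (∃ x ∈ s, f x < c) ∧ ∃ y ∈ t, c < f y :=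
  _root_.exists_eq_inter_halfspaces_of_union hs.convex hs.isClosed hs.nonempty ht.convex ht.isClosed
    ht.nonempty hst.convex ((hs.affineSpan_eq_of_subset hst subset_union_left).trans
      (ht.affineSpan_eq_of_subset hst subset_union_right).symm) hdisj

end IsSimplex

/-- if two `n`-simplices with disjoint relative interiors have a simplex as
their union, then their intersection is a common facet whose affine hull contains an
`(n-2)`-dimensional face of the union. -/
theorem merge_is_inverse_of_dissection {N n : ℕ} (S T : Set (Euc N))
    (hS : IsSimplex n S) (hT : IsSimplex n T)
    (hdisj : intrinsicInterior ℝ S ∩ intrinsicInterior ℝ T = ∅)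
    (hU : IsSimplex n (S ∪ T)) :
    (∃ v : Fin (n + 1) → Euc N, AffineIndependent ℝ v ∧ S = convexHull ℝ (Set.range v) ∧
        ∃ i : Fin (n + 1), S ∩ T = convexHull ℝ (v '' ({i}ᶜ : Set (Fin (n + 1))))) ∧
      (∃ w : Fin (n + 1) → Euc N, AffineIndependent ℝ w ∧ T = convexHull ℝ (Set.range w) ∧
        ∃ i : Fin (n + 1), S ∩ T = convexHull ℝ (w '' ({i}ᶜ : Set (Fin (n + 1))))) ∧
      ∃ u : Fin (n + 1) → Euc N, AffineIndependent ℝ u ∧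
        S ∪ T = convexHull ℝ (Set.range u) ∧
        ∃ s : Finset (Fin (n + 1)), s.card = n - 1 ∧
          convexHull ℝ (u '' (s : Set (Fin (n + 1)))) ⊆
            ((affineSpan ℝ (S ∩ T)) : Set (Euc N)) := by
  obtain ⟨f, c, hSf, hTf, ⟨x, hxS, hfx⟩, ⟨y, hyT, hfy⟩⟩ :=
    hS.exists_eq_inter_halfspaces_of_union hT hU (disjoint_iff_inter_eq_empty.2 hdisj)
  obtain ⟨u, hu, hUu⟩ := hU
  obtain ⟨vS, hvS, hSv⟩ := hS
  obtain ⟨vT, hvT, hTv⟩ := hT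
  rw [hUu] at hSf hTf
  have hS' : convexHull ℝ (range u) ∩ {x | f x ≤ c} = convexHull ℝ (range vS) := hSf ▸ hSv
  have hT' : convexHull ℝ (range u) ∩ {x | (-f) x ≤ -c} = convexHull ℝ (range vT) := by
    simpa only [LinearMap.neg_apply, neg_le_neg_iff] using hTf ▸ hTv
  have hST : S ∩ T = convexHull ℝ (range u) ∩ {x | f x = c} := by
    rw [hSf, hTf]
    ext
    simp only [mem_inter_iff, mem_ofPred_eq, le_antisymm_iff]
    tauto
  have hcT := hu.card_add_card_mul_card_le hT'
  simp only [LinearMap.neg_apply, neg_le_neg_iff, neg_lt_neg_iff] at hcT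
  obtain ⟨hB, hQ, hC⟩ := card_filter_lt_eq_one_of_card_le
    (exists_apply_lt_of_mem_convexHull (hSf ▸ hxS).1 hfx)
    (exists_lt_apply_of_mem_convexHull (hTf ▸ hyT).1 hfy) (hu.card_add_card_mul_card_le hS') hcT
  obtain ⟨iS, hiS⟩ := hu.exists_inter_hyperplane_eq_facet hvS.injective hS' hB hQ rfl
  obtain ⟨iT, hiT⟩ := hu.exists_inter_hyperplane_eq_facet hvT.injective hT'
    (by simpa only [LinearMap.neg_apply, neg_lt_neg_iff] using hQ)
    (by simpa only [LinearMap.neg_apply, neg_lt_neg_iff] using hB) rfl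
  simp only [LinearMap.neg_apply, neg_inj] at hiT
  simp only [Fintype.card_fin] at hC
  refine ⟨⟨vS, hvS, hSv, iS, hST.trans hiS⟩, ⟨vT, hvT, hTv, iT, hST.trans hiT⟩, u, hu, hUu,
    ({k | f (u k) = c} : Finset _), by omega,
    convexHull_min ?_ (AffineSubspace.convex _)⟩
  rintro _ ⟨k, hk, rfl⟩
  exact subset_affineSpan ℝ _
    (hST ▸ ⟨subset_convexHull ℝ _ (mem_range_self k), (Finset.mem_filter.1 hk).2⟩)
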